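/- arXiv:2410.21110 — 2 statements merged into one kernel-verified Lean document; each statement's English description precedes it below -/
import Mathlib

section
/- Let X, Y₁, Y₂ be real random variables on a probability space (Ω, 𝒜, P) such that X is independent of Y₁ and X is independent of Y₂. Let a > 0 be a real number and let g₁ : ℝ → ℝ be a measurable function with g₁(x) > 0 for all x < a and such that g₁(X) is integrable. Assume that the CDFs satisfy P(Y₁ ≤ y) > P(Y₂ ≤ y) for every y > 0, and that P(X < a) > 0. Then E[g₁(X)·1_{X < a and Y₁ ≤ a − X}] > E[g₁(X)·1_{X < a and Y₂ ≤ a − X}]. -/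
/-!
Independence makes the joint law of `(X, Y)` a product measure, so by Fubini each side equals
`E[g₁(X) · 1{X < a} · F_Y(a - X)]` with `F_Y` the CDF of `Y`. Since `a - X > 0` on `{X < a}`,
the integrand for `Y₁` dominates the one for `Y₂` everywhere and strictly on `{X < a}`, an event
of positive probability.
-/

open MeasureTheory ProbabilityTheory Set

section Independence

variable {Ω α β E : Type*} [MeasurableSpace Ω] [MeasurableSpace α] [MeasurableSpace β]
  [NormedAddCommGroup E] [NormedSpace ℝ E] {μ : Measure Ω} [IsFiniteMeasure μ]

theorem ProbabilityTheory.IndepFun.integral_comp_eq_integral_integral {X : Ω → α} {Y : Ω → β}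
    (hXY : IndepFun X Y μ) (hX : AEMeasurable X μ) (hY : AEMeasurable Y μ) {f : α × β → E}
    (hf : Integrable f ((μ.map X).prod (μ.map Y))) :
    ∫ ω, f (X ω, Y ω) ∂μ = ∫ x, ∫ y, f (x, y) ∂(μ.map Y) ∂(μ.map X) := by
  have hlaw := (indepFun_iff_map_prod_eq_prod_map_map hX hY).mp hXY
  rw [← integral_prod _ hf, ← hlaw, integral_map (hX.prodMk hY) (hlaw ▸ hf.aestronglyMeasurable)]

end Independence

theorem MeasureTheory.integral_lt_integral_of_le_of_lt_on {α : Type*} [MeasurableSpace α]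
    {μ : Measure α} {f g : α → ℝ} {s : Set α} (hf : Integrable f μ) (hg : Integrable g μ)
    (hle : f ≤ g) (hlt : ∀ x ∈ s, f x < g x) (hs : 0 < μ s) :
    ∫ x, f x ∂μ < ∫ x, g x ∂μ := by
  rw [← sub_pos, ← integral_sub hg hf]
  refine (integral_pos_iff_support_of_nonneg_ae (ae_of_all _ fun x => sub_nonneg.2 (hle x))
    (hg.sub hf)).2 (hs.trans_le (measure_mono fun x hx => ?_))
  exact (sub_pos.2 (hlt x hx)).ne'

noncomputable def itmPayoff (g : ℝ → ℝ) (a : ℝ) (p : ℝ × ℝ) : ℝ :=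
  if p.1 < a ∧ p.2 ≤ a - p.1 then g p.1 else 0

section ItmPayoff

variable {g : ℝ → ℝ} {a : ℝ}

theorem measurable_itmPayoff (hg : Measurable g) : Measurable (itmPayoff g a) :=
  Measurable.ite ((measurableSet_lt measurable_fst measurable_const).inter
      (measurableSet_le measurable_snd (measurable_const.sub measurable_fst)))
    (hg.comp measurable_fst) measurable_const

theorem integrable_itmPayoff {μ ν : Measure ℝ} [IsFiniteMeasure ν] (hgm : Measurable g)
    (hg : Integrable g μ) : Integrable (itmPayoff g a) (μ.prod ν) := by
  refine (hg.comp_fst ν).mono (measurable_itmPayoff hgm).aestronglyMeasurable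
    (ae_of_all _ fun p => ?_)
  unfold itmPayoff
  split_ifs <;> simp

theorem integral_itmPayoff_right (ν : Measure ℝ) (x : ℝ) :
    ∫ y, itmPayoff g a (x, y) ∂ν = if x < a then g x * ν.real (Iic (a - x)) else 0 := by
  by_cases hx : x < a
  · simp only [itmPayoff, hx, true_and, if_true]
    rw [mul_comm, ← smul_eq_mul, ← integral_indicator_const _ measurableSet_Iic]
    simp only [indicator_apply, mem_Iic]
  · simp [itmPayoff, hx]

end ItmPayoff

theorem epo_lemma_itm_general {Ω : Type*} [MeasureSpace Ω] [IsProbabilityMeasure (ℙ : Measure Ω)]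
    (X Y₁ Y₂ : Ω → ℝ) (hX : Measurable X) (hY₁ : Measurable Y₁) (hY₂ : Measurable Y₂)
    (hI₁ : IndepFun X Y₁) (hI₂ : IndepFun X Y₂)
    (a : ℝ) (g₁ : ℝ → ℝ) (hg₁m : Measurable g₁)
    (hg₁pos : ∀ x < a, 0 < g₁ x)
    (hint : Integrable (fun ω => g₁ (X ω)))
    (hcdf : ∀ y > 0, ℙ {ω | Y₂ ω ≤ y} < ℙ {ω | Y₁ ω ≤ y})
    (hXa : 0 < ℙ {ω | X ω < a}) :
    (∫ ω, (if X ω < a ∧ Y₂ ω ≤ a - X ω then g₁ (X ω) else 0)) <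
      ∫ ω, (if X ω < a ∧ Y₁ ω ≤ a - X ω then g₁ (X ω) else 0) := by
  have hg : Integrable g₁ (Measure.map X ℙ) :=
    (integrable_map_measure hg₁m.aestronglyMeasurable hX.aemeasurable).2 hint
  have hpayoff {Y : Ω → ℝ} (hY : Measurable Y) :
      Integrable (itmPayoff g₁ a) ((Measure.map X ℙ).prod (Measure.map Y ℙ)) := by
    have := Measure.isProbabilityMeasure_map (μ := ℙ) hY.aemeasurable
    exact integrable_itmPayoff hg₁m hg
  change ∫ ω, itmPayoff g₁ a (X ω, Y₂ ω) < ∫ ω, itmPayoff g₁ a (X ω, Y₁ ω)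
  rw [hI₁.integral_comp_eq_integral_integral hX.aemeasurable hY₁.aemeasurable (hpayoff hY₁),
    hI₂.integral_comp_eq_integral_integral hX.aemeasurable hY₂.aemeasurable (hpayoff hY₂)]
  have hcdf_lt (x : ℝ) (hx : x < a) :
      (Measure.map Y₂ ℙ).real (Iic (a - x)) < (Measure.map Y₁ ℙ).real (Iic (a - x)) := by
    rw [map_measureReal_apply hY₁ measurableSet_Iic, map_measureReal_apply hY₂ measurableSet_Iic]
    exact ENNReal.toReal_strict_mono (measure_ne_top _ _) (hcdf _ (sub_pos.2 hx))
  refine integral_lt_integral_of_le_of_lt_on (s := Iio a) (hpayoff hY₂).integral_prod_left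
    (hpayoff hY₁).integral_prod_left (fun x => ?_) (fun x hx => ?_) ?_
  · simp only [integral_itmPayoff_right]
    split_ifs with hx
    · exact mul_le_mul_of_nonneg_left (hcdf_lt x hx).le (hg₁pos x hx).le
    · rfl
  · simp only [integral_itmPayoff_right, show x < a from hx, if_true]
    exact mul_lt_mul_of_pos_left (hcdf_lt x hx) (hg₁pos x hx)
  · rwa [Measure.map_apply hX measurableSet_Iio]

/-- Part (i) of the auxiliary lemma: if the CDF of `Y₁` strictly dominates that of `Y₂` on
the positive half-line, then the expectation of `g₁(X)` over the in-the-money region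
`{X < a, Y ≤ a - X}` is strictly larger for `Y₁` than for `Y₂`. -/
theorem epo_lemma_itm {Ω : Type*} [MeasureSpace Ω] [IsProbabilityMeasure (ℙ : Measure Ω)]
    (X Y₁ Y₂ : Ω → ℝ) (hX : Measurable X) (hY₁ : Measurable Y₁) (hY₂ : Measurable Y₂)
    (hI₁ : IndepFun X Y₁) (hI₂ : IndepFun X Y₂)
    (a : ℝ) (ha : 0 < a) (g₁ : ℝ → ℝ) (hg₁m : Measurable g₁)
    (hg₁pos : ∀ x < a, 0 < g₁ x)
    (hint : Integrable (fun ω => g₁ (X ω)))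
    (hcdf : ∀ y > 0, ℙ {ω | Y₂ ω ≤ y} < ℙ {ω | Y₁ ω ≤ y})
    (hXa : 0 < ℙ {ω | X ω < a}) :
    (∫ ω, (if X ω < a ∧ Y₂ ω ≤ a - X ω then g₁ (X ω) else 0)) <
      ∫ ω, (if X ω < a ∧ Y₁ ω ≤ a - X ω then g₁ (X ω) else 0) :=
  epo_lemma_itm_general X Y₁ Y₂ hX hY₁ hY₂ hI₁ hI₂ a g₁ hg₁m hg₁pos hint hcdf hXa
end

section
/- Let X, Y₁, Y₂ be real random variables on a probability space (Ω, 𝒜, P) such that X is independent of Y₁ and X is independent of Y₂. Let a > 0 be a real number and let g₂ : ℝ → ℝ be a measurable function with g₂(x) > 0 for all x > a and such that g₂(X) is integrable. Assume that the CDFs satisfy P(Y₁ ≤ y) < P(Y₂ ≤ y) for every y < 0, and that P(X > a) > 0. Then E[g₂(X)·1_{X > a and Y₁ ≤ a − X}] < E[g₂(X)·1_{X > a and Y₂ ≤ a − X}]. -/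
/-!
By independence, the joint law of `(X, Y)` is the product of the marginals, so Fubini turns
`E[g₂(X) 1{X > a, Y ≤ a - X}]` into `E[g₂(X) 1{X > a} F_Y(a - X)]`. On `{X > a}` the argument
`a - X` is negative, where `F_{Y₁} < F_{Y₂}` and `g₂(X) > 0`; since `{X > a}` has positive
probability, the inequality survives integration.
-/

open MeasureTheory ProbabilityTheory

theorem MeasureTheory.integral_lt_integral_of_ae_le_of_measure_setOf_lt_pos
    {α : Type*} [MeasurableSpace α] {μ : Measure α} {f g : α → ℝ}
    (hf : Integrable f μ) (hg : Integrable g μ) (hle : f ≤ᵐ[μ] g)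
    (hlt : 0 < μ {x | f x < g x}) :
    ∫ x, f x ∂μ < ∫ x, g x ∂μ := by
  rw [← sub_pos, ← integral_sub hg hf,
    integral_pos_iff_support_of_nonneg_ae (hle.mono fun x => sub_nonneg.2) (hg.sub hf)]
  exact hlt.trans_le (measure_mono fun x hx => (sub_pos.2 hx).ne')

namespace ProbabilityTheory

variable {Ω α : Type*} [MeasurableSpace Ω] [MeasurableSpace α] {μ : Measure Ω}

lemma cdf_map_eq_measureReal [IsProbabilityMeasure μ] {Y : Ω → ℝ} (hY : Measurable Y)
    (y : ℝ) :
    cdf (μ.map Y) y = μ.real {ω | Y ω ≤ y} := by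
  have := Measure.isProbabilityMeasure_map (μ := μ) hY.aemeasurable
  rw [cdf_eq_real, measureReal_def, Measure.map_apply hY measurableSet_Iic]
  rfl

lemma _root_.MeasureTheory.Integrable.mul_cdf_comp {f t : Ω → ℝ} (hf : Integrable f μ)
    (ht : Measurable t) (ν : Measure ℝ) : Integrable (fun ω => f ω * cdf ν (t ω)) μ :=
  hf.mul_bdd ((cdf ν).mono.measurable.comp ht).aestronglyMeasurable (c := 1)
    (ae_of_all _ fun ω => by
      rw [Real.norm_of_nonneg (cdf_nonneg ν _)]
      exact cdf_le_one ν _)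

theorem IndepFun.integral_ite_le_comp_eq_integral_mul_cdf [IsProbabilityMeasure μ]
    {X : Ω → α} {Y : Ω → ℝ} (hX : Measurable X) (hY : Measurable Y)
    (hXY : IndepFun X Y μ) {φ t : α → ℝ} (hφ : Measurable φ) (ht : Measurable t)
    (hφX : Integrable (φ ∘ X) μ) :
    ∫ ω, (if Y ω ≤ t (X ω) then φ (X ω) else 0) ∂μ =
      ∫ ω, φ (X ω) * cdf (μ.map Y) (t (X ω)) ∂μ := by
  set ν := μ.map Y
  have : IsProbabilityMeasure ν := Measure.isProbabilityMeasure_map hY.aemeasurable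
  set F : α × ℝ → ℝ := fun p => if p.2 ≤ t p.1 then φ p.1 else 0
  have hF : Measurable F := Measurable.ite
    (measurableSet_le measurable_snd (ht.comp measurable_fst)) (hφ.comp measurable_fst)
    measurable_const
  have hφ' : Integrable φ (μ.map X) :=
    (integrable_map_measure hφ.aestronglyMeasurable hX.aemeasurable).2 hφX
  have hFint : Integrable F ((μ.map X).prod ν) :=
    (hφ'.comp_fst ν).mono hF.aestronglyMeasurable (ae_of_all _ fun p => by
      simp only [F]
      split_ifs <;> simp)
  calc ∫ ω, (if Y ω ≤ t (X ω) then φ (X ω) else 0) ∂μ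
      = ∫ p, F p ∂(μ.map fun ω => (X ω, Y ω)) :=
        (integral_map (hX.prodMk hY).aemeasurable hF.aestronglyMeasurable).symm
    _ = ∫ x, ∫ y, F (x, y) ∂ν ∂(μ.map X) := by
        rw [(indepFun_iff_map_prod_eq_prod_map_map hX.aemeasurable hY.aemeasurable).1 hXY,
          integral_prod F hFint]
    _ = ∫ x, φ x * cdf ν (t x) ∂(μ.map X) := by
        refine integral_congr_ae (ae_of_all _ fun x => ?_)
        have : (fun y => F (x, y)) = (Set.Iic (t x)).indicator fun _ => φ x := by
          ext y
          simp [F, Set.indicator]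
        simp only [this, integral_indicator_const _ measurableSet_Iic, smul_eq_mul,
          cdf_eq_real, mul_comm]
    _ = ∫ ω, φ (X ω) * cdf ν (t (X ω)) ∂μ :=
        integral_map hX.aemeasurable
          (hφ.mul ((cdf ν).mono.measurable.comp ht)).aestronglyMeasurable

end ProbabilityTheory

theorem epo_lemma_otm_general {Ω : Type*} [MeasureSpace Ω] [IsProbabilityMeasure (ℙ : Measure Ω)]
    (X Y₁ Y₂ : Ω → ℝ) (hX : Measurable X) (hY₁ : Measurable Y₁) (hY₂ : Measurable Y₂)
    (hI₁ : IndepFun X Y₁) (hI₂ : IndepFun X Y₂)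
    (a : ℝ) (g₂ : ℝ → ℝ) (hg₂m : Measurable g₂)
    (hg₂pos : ∀ x, a < x → 0 < g₂ x)
    (hint : Integrable (fun ω => g₂ (X ω)))
    (hcdf : ∀ y < 0, ℙ {ω | Y₁ ω ≤ y} < ℙ {ω | Y₂ ω ≤ y})
    (hXa : 0 < ℙ {ω | a < X ω}) :
    (∫ ω, (if a < X ω ∧ Y₁ ω ≤ a - X ω then g₂ (X ω) else 0)) <
      ∫ ω, (if a < X ω ∧ Y₂ ω ≤ a - X ω then g₂ (X ω) else 0) := by
  set φ := (Set.Ioi a).indicator g₂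
  have hφ : Measurable φ := hg₂m.indicator measurableSet_Ioi
  have hφX : Integrable (φ ∘ X) := hint.mono (hφ.comp hX).aestronglyMeasurable
    (ae_of_all _ fun ω => norm_indicator_le_norm_self _ _)
  have hite (Y : Ω → ℝ) :
      (fun ω => if a < X ω ∧ Y ω ≤ a - X ω then g₂ (X ω) else 0) =
        fun ω => if Y ω ≤ a - X ω then φ (X ω) else 0 := by
    ext ω
    by_cases h : a < X ω <;> simp [φ, h]
  have hlt (x : ℝ) (hx : a < x) :
      φ x * cdf (Measure.map Y₁ ℙ) (a - x) < φ x * cdf (Measure.map Y₂ ℙ) (a - x) := by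
    rw [cdf_map_eq_measureReal hY₁, cdf_map_eq_measureReal hY₂]
    refine mul_lt_mul_of_pos_left ?_ (by simpa [φ, hx] using hg₂pos x hx)
    exact ENNReal.toReal_strict_mono (measure_ne_top _ _) (hcdf _ (by linarith))
  have hle (x : ℝ) :
      φ x * cdf (Measure.map Y₁ ℙ) (a - x) ≤ φ x * cdf (Measure.map Y₂ ℙ) (a - x) := by
    by_cases hx : a < x
    · exact (hlt x hx).le
    · simp [φ, hx]
  have ht : Measurable fun x : ℝ => a - x := measurable_const.sub measurable_id
  rw [hite, hite, hI₁.integral_ite_le_comp_eq_integral_mul_cdf hX hY₁ hφ ht hφX,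
    hI₂.integral_ite_le_comp_eq_integral_mul_cdf hX hY₂ hφ ht hφX]
  exact integral_lt_integral_of_ae_le_of_measure_setOf_lt_pos
    (hφX.mul_cdf_comp (ht.comp hX) _) (hφX.mul_cdf_comp (ht.comp hX) _)
    (ae_of_all _ fun ω => hle (X ω)) (hXa.trans_le (measure_mono fun ω hω => hlt _ hω))

/-- Part (ii) of the auxiliary lemma: if the CDF of `Y₁` is strictly below that of `Y₂` on
the negative half-line, then the expectation of `g₂(X)` over the out-of-the-money region
`{X > a, Y ≤ a - X}` is strictly smaller for `Y₁` than for `Y₂`. -/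
theorem epo_lemma_otm {Ω : Type*} [MeasureSpace Ω] [IsProbabilityMeasure (ℙ : Measure Ω)]
    (X Y₁ Y₂ : Ω → ℝ) (hX : Measurable X) (hY₁ : Measurable Y₁) (hY₂ : Measurable Y₂)
    (hI₁ : IndepFun X Y₁) (hI₂ : IndepFun X Y₂)
    (a : ℝ) (ha : 0 < a) (g₂ : ℝ → ℝ) (hg₂m : Measurable g₂)
    (hg₂pos : ∀ x, a < x → 0 < g₂ x)
    (hint : Integrable (fun ω => g₂ (X ω)))
    (hcdf : ∀ y < 0, ℙ {ω | Y₁ ω ≤ y} < ℙ {ω | Y₂ ω ≤ y})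
    (hXa : 0 < ℙ {ω | a < X ω}) :
    (∫ ω, (if a < X ω ∧ Y₁ ω ≤ a - X ω then g₂ (X ω) else 0)) <
      ∫ ω, (if a < X ω ∧ Y₂ ω ≤ a - X ω then g₂ (X ω) else 0) :=
  epo_lemma_otm_general X Y₁ Y₂ hX hY₁ hY₂ hI₁ hI₂ a g₂ hg₂m hg₂pos hint hcdf hXa
end
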